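/- Let X be a finite set, X* ⊆ X, 𝒟 = 2^X∖{∅}, and ρ a complete dataset. Let 𝒞 = {A ∪ E : E ∈ 2^{X*}} for some A ⊆ X∖X*, i.e., ℰ = 2^{X*} (nonessential test collection of type (i)). Then δ_ρ(𝒞) = 0, where δ_ρ(𝒞) = Σ_{(D,x): D∈𝒞, D∪x∉𝒞, x∉X*} K(ρ, D∪x, x) − Σ_{(E,y): E∉𝒞, E∪y∈𝒞, y∉X*} K(ρ, E∪y, y) + 1{X∈𝒞, ∅∉𝒞} − 1{∅∈𝒞, X∉𝒞}. -/

import Mathlib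

open Finset

variable {α : Type*} [Fintype α] [DecidableEq α]

/-- The Block–Marschak polynomial `K(ρ, D, x) = ∑_{F ⊇ D} (-1)^{|F \ D|} ρ(F, x)`. -/
noncomputable def bmK (ρ : Finset α → α → ℝ) (D : Finset α) (x : α) : ℝ :=
  ∑ E : Finset α, if D ⊆ E then (-1 : ℝ) ^ (E \ D).card * ρ E x else 0

/-- `δ_ρ(𝒞)`: the net observable outflow of `𝒞 ⊆ 2^X` when `𝒟 = 2^X ∖ {∅}`,
so an arc `(D, D ∪ {x})` is observable iff `x ∉ X*`. -/
noncomputable def deltaBM (Xstar : Finset α)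
    (ρ : Finset α → α → ℝ) (C : Finset (Finset α)) : ℝ :=
  (∑ D : Finset α, ∑ x : α,
      if x ∉ D ∧ x ∉ Xstar ∧ D ∈ C ∧ insert x D ∉ C then
        bmK ρ (insert x D) x else 0)
    - (∑ E : Finset α, ∑ y : α,
        if y ∉ E ∧ y ∉ Xstar ∧ E ∉ C ∧ insert y E ∈ C then
          bmK ρ (insert y E) y else 0)
    + (if Finset.univ ∈ C ∧ ∅ ∉ C then 1 else 0)
    - (if ∅ ∈ C ∧ Finset.univ ∉ C then 1 else 0)

/-!
`r(D, D ∪ {x}) = K(ρ, D ∪ {x}, x)` is a flow on the Boolean lattice `2^X`: for a complete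
dataset, outflow minus inflow is `1` at `∅`, `-1` at `X` and `0` elsewhere. Summing this over
`𝒞`, the arcs inside `𝒞` cancel, so the net flow across the boundary of `𝒞` equals
`1{∅ ∈ 𝒞} - 1{X ∈ 𝒞}`, which is `δ_ρ(𝒞)` up to the unobservable boundary arcs. For
`𝒞 = [A, A ∪ X*]` with `A ∩ X* = ∅`, adding an element of `X*` never crosses the boundary.
-/

theorem sum_ite_subset_neg_one_pow_card_sdiff (D : Finset α) :
    (∑ F : Finset α, if D ⊆ F then (-1 : ℝ) ^ (F \ D).card else 0) =
      if D = univ then 1 else 0 := by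
  have hdisj {G : Finset α} (hG : G ∈ (univ \ D).powerset) : (D ∪ G) \ D = G :=
    union_sdiff_cancel_left (disjoint_of_subset_right (mem_powerset.1 hG) disjoint_sdiff)
  have hIcc : univ.filter (D ⊆ ·) = (univ \ D).powerset.image (D ∪ ·) := by
    rw [← Icc_eq_image_powerset (subset_univ D), Icc_eq_filter_powerset, powerset_univ]
  rw [← sum_filter, hIcc, sum_image fun G hG G' hG' h => by
    rw [← hdisj hG, ← hdisj hG']; exact congrArg (· \ D) h]
  rw [sum_congr rfl fun G hG => by rw [hdisj hG]]
  have := sum_powerset_neg_one_pow_card (x := univ \ D)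
  simp only [sdiff_eq_empty_iff_subset, univ_subset_iff] at this
  exact_mod_cast this

theorem ite_subset_insert_neg_one_pow {β : Type*} [DecidableEq β] {D F : Finset β} {y : β}
    (hy : y ∉ D) :
    (if D ⊆ F ∧ y ∈ F then (-1 : ℝ) ^ (F \ D).card else 0) =
      -(if insert y D ⊆ F then (-1 : ℝ) ^ (F \ insert y D).card else 0) := by
  simp only [insert_subset_iff, and_comm (a := y ∈ F)]
  split_ifs with h
  · have hcard : (F \ D).card = (F \ insert y D).card + 1 := by
      rw [sdiff_insert, card_erase_add_one (mem_sdiff.2 ⟨h.2, hy⟩)]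
    rw [hcard, pow_succ]; ring
  · simp

noncomputable def inflow (ρ : Finset α → α → ℝ) (D : Finset α) : ℝ :=
  ∑ y ∈ D, bmK ρ D y

noncomputable def outflow (ρ : Finset α → α → ℝ) (D : Finset α) : ℝ :=
  ∑ x ∈ Dᶜ, bmK ρ (insert x D) x

theorem inflow_sub_outflow (ρ : Finset α → α → ℝ)
    (hρ : ∀ D : Finset α, D.Nonempty → ∑ x ∈ D, ρ D x = 1) (D : Finset α) :
    inflow ρ D - outflow ρ D = (if D = univ then 1 else 0) - (if D = ∅ then 1 else 0) := by
  -- Both flows are parts of `∑_{F ⊇ D} (-1)^|F \ D| ∑_{y ∈ F} ρ F y`, split by `y ∈ D`.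
  let w (F : Finset α) (y : α) : ℝ :=
    (if D ⊆ F ∧ y ∈ F then (-1 : ℝ) ^ (F \ D).card else 0) * ρ F y
  have hin : inflow ρ D = ∑ y ∈ D, ∑ F, w F y :=
    sum_congr rfl fun y hy => sum_congr rfl fun F _ => by
      simp only [w, and_iff_left_of_imp fun h : D ⊆ F => h hy, ite_mul, zero_mul]
  have hout : outflow ρ D = -∑ y ∈ Dᶜ, ∑ F, w F y := by
    simp only [outflow, bmK, ← sum_neg_distrib]
    refine sum_congr rfl fun y hy => sum_congr rfl fun F _ => ?_
    simp only [w]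
    rw [ite_subset_insert_neg_one_pow (mem_compl.1 hy), neg_mul, neg_neg, ite_mul, zero_mul]
  have hmass (F : Finset α) : ∑ y ∈ F, ρ F y = 1 - if F = ∅ then 1 else 0 := by
    rcases F.eq_empty_or_nonempty with rfl | hF
    · simp
    · simp [hρ F hF, hF.ne_empty]
  calc inflow ρ D - outflow ρ D = ∑ y, ∑ F, w F y := by
        rw [hin, hout, sub_neg_eq_add, sum_add_sum_compl]
    _ = ∑ F, (if D ⊆ F then (-1 : ℝ) ^ (F \ D).card else 0) * ∑ y ∈ F, ρ F y := by
        rw [sum_comm]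
        refine sum_congr rfl fun F _ => ?_
        by_cases hDF : D ⊆ F <;> simp [w, hDF, ite_mul, mul_sum]
    _ = _ := by
        simp only [hmass, mul_sub, mul_one, sum_sub_distrib, sum_ite_subset_neg_one_pow_card_sdiff]
        simp [mul_ite, subset_empty]

noncomputable def arcFlow (ρ : Finset α → α → ℝ) (P : Finset α → α → Prop) [DecidableRel P] :
    ℝ :=
  ∑ D, ∑ x, if x ∉ D ∧ P D x then bmK ρ (insert x D) x else 0

theorem arcFlow_congr (ρ : Finset α → α → ℝ) {P Q : Finset α → α → Prop} [DecidableRel P]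
    [DecidableRel Q] (h : ∀ D x, x ∉ D → (P D x ↔ Q D x)) : arcFlow ρ P = arcFlow ρ Q :=
  sum_congr rfl fun D _ => sum_congr rfl fun x _ =>
    if_congr (and_congr_right (h D x)) rfl rfl

theorem arcFlow_sub_arcFlow (ρ : Finset α → α → ℝ) (P Q : Finset α → α → Prop) [DecidableRel P]
    [DecidableRel Q] :
    arcFlow ρ P - arcFlow ρ Q =
      arcFlow ρ (fun D x => P D x ∧ ¬Q D x) - arcFlow ρ (fun D x => Q D x ∧ ¬P D x) := by
  simp only [arcFlow, ← sum_sub_distrib]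
  refine sum_congr rfl fun D _ => sum_congr rfl fun x _ => ?_
  split_ifs <;> simp_all

theorem sum_outflow_eq_arcFlow (ρ : Finset α → α → ℝ) (C : Finset (Finset α)) :
    ∑ D ∈ C, outflow ρ D = arcFlow ρ (fun D _ => D ∈ C) := by
  simp only [arcFlow, outflow, and_comm (b := _ ∈ C), ite_and, sum_ite_irrel, sum_const_zero,
    sum_ite_mem univ, univ_inter, ← mem_compl]

theorem sum_notMem_comp_insert {M : Type*} [AddCommMonoid M] (y : α) (g : Finset α → M) :
    ∑ E, (if y ∉ E then g (insert y E) else 0) = ∑ D, if y ∈ D then g D else 0 := by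
  rw [← sum_filter, ← sum_filter]
  refine sum_nbij' (insert y) (erase · y) (by simp) (by simp) (fun E hE => ?_) (fun D hD => ?_)
    (fun _ _ => rfl)
  · exact erase_insert (mem_filter.1 hE).2
  · exact insert_erase (mem_filter.1 hD).2

theorem sum_inflow_eq_arcFlow (ρ : Finset α → α → ℝ) (C : Finset (Finset α)) :
    ∑ D ∈ C, inflow ρ D = arcFlow ρ (fun D x => insert x D ∈ C) := by
  have hx (x : α) := sum_notMem_comp_insert x fun B => if B ∈ C then bmK ρ B x else 0
  simp only [arcFlow, ite_and] at hx ⊢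
  rw [sum_comm]
  simp only [hx]
  rw [sum_comm]
  simp only [inflow, sum_ite_mem univ, univ_inter, sum_ite_irrel, sum_const_zero]

theorem arcFlow_exit_sub_arcFlow_entry (ρ : Finset α → α → ℝ)
    (hρ : ∀ D : Finset α, D.Nonempty → ∑ x ∈ D, ρ D x = 1) (C : Finset (Finset α)) :
    arcFlow ρ (fun D x => D ∈ C ∧ insert x D ∉ C) - arcFlow ρ (fun D x => insert x D ∈ C ∧ D ∉ C) =
      (if ∅ ∈ C then 1 else 0) - (if univ ∈ C then 1 else 0) := by
  rw [← arcFlow_sub_arcFlow, ← sum_outflow_eq_arcFlow, ← sum_inflow_eq_arcFlow, ← sum_sub_distrib]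
  calc ∑ D ∈ C, (outflow ρ D - inflow ρ D)
      = ∑ D ∈ C, ((if D = ∅ then 1 else 0) - (if D = univ then 1 else 0)) :=
        sum_congr rfl fun D _ => by rw [← neg_sub, inflow_sub_outflow ρ hρ D]; ring
    _ = _ := by simp [sum_sub_distrib]

theorem deltaBM_eq_arcFlow (Xstar : Finset α) (ρ : Finset α → α → ℝ) (C : Finset (Finset α)) :
    deltaBM Xstar ρ C =
      arcFlow ρ (fun D x => x ∉ Xstar ∧ D ∈ C ∧ insert x D ∉ C)
        - arcFlow ρ (fun D x => x ∉ Xstar ∧ D ∉ C ∧ insert x D ∈ C)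
        + (if univ ∈ C ∧ ∅ ∉ C then 1 else 0) - (if ∅ ∈ C ∧ univ ∉ C then 1 else 0) :=
  rfl

theorem deltaBM_eq_zero_of_insert_mem_iff (Xstar : Finset α) (ρ : Finset α → α → ℝ)
    (hρ : ∀ D : Finset α, D.Nonempty → ∑ x ∈ D, ρ D x = 1) (C : Finset (Finset α))
    (hC : ∀ D x, x ∈ Xstar → x ∉ D → (insert x D ∈ C ↔ D ∈ C)) :
    deltaBM Xstar ρ C = 0 := by
  have hexit : arcFlow ρ (fun D x => x ∉ Xstar ∧ D ∈ C ∧ insert x D ∉ C) =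
      arcFlow ρ (fun D x => D ∈ C ∧ insert x D ∉ C) :=
    arcFlow_congr ρ fun D x hxD => by
      by_cases hx : x ∈ Xstar
      · simp [hx, hC D x hx hxD]
      · simp [hx]
  have hentry : arcFlow ρ (fun D x => x ∉ Xstar ∧ D ∉ C ∧ insert x D ∈ C) =
      arcFlow ρ (fun D x => insert x D ∈ C ∧ D ∉ C) :=
    arcFlow_congr ρ fun D x hxD => by
      by_cases hx : x ∈ Xstar
      · simp [hx, hC D x hx hxD]
      · simp [hx, and_comm]
  have hsource : ((if univ ∈ C ∧ ∅ ∉ C then 1 else 0) - if ∅ ∈ C ∧ univ ∉ C then 1 else 0 : ℝ) =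
      (if univ ∈ C then 1 else 0) - if ∅ ∈ C then 1 else 0 := by
    by_cases h0 : ∅ ∈ C <;> by_cases h1 : univ ∈ C <;> simp [h0, h1]
  rw [deltaBM_eq_arcFlow, hexit, hentry, add_sub_assoc, hsource,
    arcFlow_exit_sub_arcFlow_entry ρ hρ C]
  ring

theorem insert_mem_Icc_iff {β : Type*} [DecidableEq β] {A B D : Finset β} {x : β} (hxA : x ∉ A)
    (hxB : x ∈ B) : insert x D ∈ Icc A B ↔ D ∈ Icc A B := by
  simp [insert_subset_iff, hxB, subset_insert_iff_of_notMem hxA]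

theorem image_union_powerset_eq_Icc {β : Type*} [DecidableEq β] {A X : Finset β}
    (h : Disjoint A X) : X.powerset.image (A ∪ ·) = Icc A (A ∪ X) := by
  rw [Icc_eq_image_powerset subset_union_left, union_sdiff_cancel_left h]

theorem stmt_11_general (Xstar A : Finset α) (hA : A ⊆ Xstarᶜ)
    (ρ : Finset α → α → ℝ)
    (hρ1 : ∀ D : Finset α, D.Nonempty → ∑ x ∈ D, ρ D x = 1) :
    deltaBM Xstar ρ (Xstar.powerset.image (fun E => A ∪ E)) = 0 := by
  rw [image_union_powerset_eq_Icc (subset_compl_iff_disjoint_right.1 hA)]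
  exact deltaBM_eq_zero_of_insert_mem_iff Xstar ρ hρ1 _ fun D x hx _ =>
    insert_mem_Icc_iff (fun hxA => mem_compl.1 (hA hxA) hx) (mem_union_right A hx)

/-- For a complete dataset `ρ` and the nonessential test collection
`𝒞 = {A ∪ E : E ⊆ X*}` (i.e. `ℰ = 2^{X*}`), we have `δ_ρ(𝒞) = 0`. -/
theorem stmt_11 (Xstar A : Finset α) (hA : A ⊆ Xstarᶜ)
    (ρ : Finset α → α → ℝ)
    (hρ0 : ∀ (D : Finset α) (x : α), 0 ≤ ρ D x)
    (hρ1 : ∀ D : Finset α, D.Nonempty → ∑ x ∈ D, ρ D x = 1) :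
    deltaBM Xstar ρ (Xstar.powerset.image (fun E => A ∪ E)) = 0 :=
  stmt_11_general Xstar A hA ρ hρ1
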